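/- arXiv:1509.03754 — 2 statements merged into one kernel-verified Lean document; each statement's English description precedes it below -/
import Mathlib

section
/- Let Δ be a thin chamber complex of rank n and k ∈ {1,...,n-2}. If X and Y are weakly adjacent k-faces of Δ (their intersection is a (k-1)-face and no face of Δ contains both), then no simple zigzag connects X and Y; that is, there is no simple zigzag such that both X and Y occur as k-faces of flags in the zigzag. -/
/-! The vertices `x_i` of a zigzag of length `l` form an `l`-periodic sequence which, for a simple
zigzag, is injective on a period; so they are the values of an injective map on `ZMod l`, and the
`k`-faces of the flags are cyclic windows of `k + 1` consecutive vertices. Consider the one vertex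
of `Y` outside `X`: its neighbours inside the window `Y` lie in `X`, so they are ends of the window
`X`. If it is an end of `Y`, the two windows are shifted by one and `X ∪ Y` is a window of
`k + 2 ≤ n` consecutive vertices. Otherwise it sits between the last and the first vertex of `X`,
so `l ∣ k + 2`, hence `l ≤ n` and a single flag contains every vertex. In both cases `X ∪ Y` lies in
the vertex set of a flag of the zigzag, which is a face. -/

open scoped Classical

variable {V : Type*}

/-- `C` is a facet (maximal face) of a pure rank-`n` complex: a face with `n` vertices. -/
def IsFacet (n : ℕ) (faces : Finset V → Prop) (C : Finset V) : Prop :=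
  faces C ∧ C.card = n

/-- `faces` describes a thin pure simplicial complex of rank `n` over the vertex set `V`:
it is downward closed, every singleton is a face, every face has at most `n` vertices and is
contained in a facet, and every ridge (face with `n - 1` vertices) lies in exactly two facets. -/
def IsThinComplex (n : ℕ) (faces : Finset V → Prop) : Prop :=
  (∀ v : V, faces {v}) ∧
  (∀ ⦃X Y : Finset V⦄, faces X → Y ⊆ X → faces Y) ∧
  (∀ ⦃X : Finset V⦄, faces X → X.card ≤ n) ∧
  (∀ ⦃X : Finset V⦄, faces X → ∃ C : Finset V, IsFacet n faces C ∧ X ⊆ C) ∧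
  (∀ ⦃R : Finset V⦄, faces R → R.card = n - 1 →
    {C : Finset V | IsFacet n faces C ∧ R ⊆ C}.ncard = 2)

/-- A flag, encoded by the ordered vertex sequence `x_0, …, x_{n-1}` determining it:
the chain of faces is `{x_0} ⊂ {x_0,x_1} ⊂ … ⊂ {x_0,…,x_{n-1}}`, the top being a facet. -/
def IsFlag (n : ℕ) (faces : Finset V → Prop) (F : List V) : Prop :=
  F.length = n ∧ F.Nodup ∧ faces F.toFinset

/-- `G = T(F)` for the zigzag operator `T = σ_{n-1} ∘ ⋯ ∘ σ_0`: if `F` is determined by the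
vertex sequence `x_0, x_1, …, x_{n-1}`, then `T(F)` is determined by `x_1, …, x_{n-1}, y` with
`y ≠ x_0`. -/
def TStep (n : ℕ) (faces : Finset V → Prop) (F G : List V) : Prop :=
  IsFlag n faces F ∧ IsFlag n faces G ∧
    ∃ y : V, G = F.tail ++ [y] ∧ F.head? ≠ some y

/-- A zigzag of length `l`: the orbit `F, T F, T² F, …` of the operator `T` on flags, recorded
as the sequence `i ↦ Tⁱ F`; it is `l`-periodic with `l` the minimal period. -/
def IsZigzag (n : ℕ) (faces : Finset V → Prop) (l : ℕ) (F : ℕ → List V) : Prop :=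
  0 < l ∧ (∀ i : ℕ, TStep n faces (F i) (F (i + 1))) ∧ (∀ i : ℕ, F (i + l) = F i) ∧
    ∀ m : ℕ, 0 < m → (∀ i : ℕ, F (i + m) = F i) → l ≤ m

/-- The set of flags of a zigzag together with those of its reverse zigzag; two zigzags are
identified (a zigzag is identified with its reverse, and with its cyclic shifts) exactly when
these sets coincide. -/
def ZigzagClass (F : ℕ → List V) : Set (List V) :=
  Set.range F ∪ Set.range fun i => (F i).reverse

/-- `G = σ_i(F)`: the flag `G` has the same `j`-faces as `F` for all `j ≠ i`, and a different
`i`-face (the `j`-face of the flag with vertex sequence `F` is `(F.take (j+1)).toFinset`). -/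
def SigmaStep (n : ℕ) (faces : Finset V → Prop) (i : ℕ) (F G : List V) : Prop :=
  IsFlag n faces F ∧ IsFlag n faces G ∧
    (∀ j : ℕ, j < n → j ≠ i → (G.take (j + 1)).toFinset = (F.take (j + 1)).toFinset) ∧
    (G.take (i + 1)).toFinset ≠ (F.take (i + 1)).toFinset

/-- `G = T_δ(F)` where `T_δ = σ_{δ(n-1)} ∘ ⋯ ∘ σ_{δ(0)}`. -/
def TDeltaStep (n : ℕ) (faces : Finset V → Prop) (δ : Equiv.Perm (Fin n))
    (F G : List V) : Prop :=
  ∃ c : ℕ → List V, c 0 = F ∧ c n = G ∧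
    ∀ i : Fin n, SigmaStep n faces (δ i) (c i) (c (i + 1))

/-- A generalized zigzag (δ-zigzag) of length `l`: the orbit of `T_δ` on flags. -/
def IsGenZigzag (n : ℕ) (faces : Finset V → Prop) (δ : Equiv.Perm (Fin n)) (l : ℕ)
    (F : ℕ → List V) : Prop :=
  0 < l ∧ (∀ i : ℕ, TDeltaStep n faces δ (F i) (F (i + 1))) ∧ (∀ i : ℕ, F (i + l) = F i) ∧
    ∀ m : ℕ, 0 < m → (∀ i : ℕ, F (i + m) = F i) → l ≤ m

/-- Adjacency in the facet-adjacency graph `Γ_{n-1}(Δ)`: two distinct facets meeting in a ridge. -/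
def FacetAdj (n : ℕ) (faces : Finset V → Prop) (C D : Finset V) : Prop :=
  IsFacet n faces C ∧ IsFacet n faces D ∧ C ≠ D ∧ (C ∩ D).card = n - 1

/-- `p 0, p 1, …, p m` is a path in the facet-adjacency graph. -/
def IsFacetPath (n : ℕ) (faces : Finset V → Prop) (m : ℕ) (p : ℕ → Finset V) : Prop :=
  ∀ i : ℕ, i < m → FacetAdj n faces (p i) (p (i + 1))

/-- The path distance in the facet-adjacency graph `Γ_{n-1}(Δ)`. -/
noncomputable def facetDist (n : ℕ) (faces : Finset V → Prop) (X Y : Finset V) : ℕ :=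
  sInf {m : ℕ | ∃ p : ℕ → Finset V, p 0 = X ∧ p m = Y ∧ IsFacetPath n faces m p}

/-- The complex is a chamber complex: the facet-adjacency graph is connected. -/
def ChamberConnected (n : ℕ) (faces : Finset V → Prop) : Prop :=
  ∀ C D : Finset V, IsFacet n faces C → IsFacet n faces D →
    ∃ (m : ℕ) (p : ℕ → Finset V), p 0 = C ∧ p m = D ∧ IsFacetPath n faces m p

open Finset Function

section CyclicWindow

variable {l : ℕ} {y : ZMod l → V}

noncomputable def cyclicWindow (y : ZMod l → V) (a : ZMod l) (m : ℕ) : Finset V :=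
  (range m).image fun t : ℕ => y (a + t)

theorem mem_cyclicWindow {a : ZMod l} {m : ℕ} {v : V} :
    v ∈ cyclicWindow y a m ↔ ∃ t < m, y (a + t) = v := by
  simp [cyclicWindow]

theorem apply_add_mem_cyclicWindow {a : ZMod l} {m t : ℕ} (ht : t < m) :
    y (a + t) ∈ cyclicWindow y a m :=
  mem_cyclicWindow.2 ⟨t, ht, rfl⟩

theorem cyclicWindow_mono {a : ZMod l} {m m' : ℕ} (h : m ≤ m') :
    cyclicWindow y a m ⊆ cyclicWindow y a m' :=
  image_subset_image (range_subset_range.2 h)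

theorem cyclicWindow_subset_add_one_of_eq_add_one {a b : ZMod l} {m : ℕ} (h : b = a + 1) :
    cyclicWindow y b m ⊆ cyclicWindow y a (m + 1) := by
  intro v hv
  obtain ⟨t, ht, rfl⟩ := mem_cyclicWindow.1 hv
  refine mem_cyclicWindow.2 ⟨t + 1, by omega, ?_⟩
  rw [h]
  push_cast
  ring_nf

theorem cyclicWindow_subset_of_le [NeZero l] (a b : ZMod l) {m m' : ℕ} (hl : l ≤ m') :
    cyclicWindow y b m ⊆ cyclicWindow y a m' := by
  intro v hv
  obtain ⟨t, -, rfl⟩ := mem_cyclicWindow.1 hv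
  refine mem_cyclicWindow.2 ⟨(b + t - a).val, (ZMod.val_lt _).trans_le hl, ?_⟩
  rw [ZMod.natCast_zmod_val, add_sub_cancel]

theorem add_one_eq_of_notMem_cyclicWindow_of_add_one_mem (hy : Injective y) {a c : ZMod l} {k : ℕ}
    (h₀ : y c ∉ cyclicWindow y a (k + 1)) (h₁ : y (c + 1) ∈ cyclicWindow y a (k + 1)) :
    c + 1 = a := by
  obtain ⟨s, hs, hsc⟩ := mem_cyclicWindow.1 h₁
  obtain _ | s := s
  · simpa using (hy hsc).symm
  · refine absurd (mem_cyclicWindow.2 ⟨s, by omega, congrArg y ?_⟩) h₀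
    have := hy hsc
    push_cast at this
    linear_combination this

theorem eq_add_of_mem_cyclicWindow_of_add_one_notMem (hy : Injective y) {a c : ZMod l} {k : ℕ}
    (h₀ : y c ∈ cyclicWindow y a (k + 1)) (h₁ : y (c + 1) ∉ cyclicWindow y a (k + 1)) :
    c = a + k := by
  obtain ⟨s, hs, hsc⟩ := mem_cyclicWindow.1 h₀
  obtain rfl | hsk : s = k ∨ s < k := by omega
  · exact (hy hsc).symm
  · refine absurd (mem_cyclicWindow.2 ⟨s + 1, by omega, congrArg y ?_⟩) h₁
    rw [← hy hsc]
    push_cast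
    ring

theorem eq_add_one_or_eq_add_one_or_dvd_of_card_cyclicWindow_inter (hy : Injective y)
    {a b : ZMod l} {k : ℕ} (hk : 1 ≤ k)
    (hb : (cyclicWindow y b (k + 1)).card = k + 1)
    (hab : (cyclicWindow y a (k + 1) ∩ cyclicWindow y b (k + 1)).card = k) :
    b = a + 1 ∨ a = b + 1 ∨ l ∣ k + 2 := by
  set X := cyclicWindow y a (k + 1)
  set Y := cyclicWindow y b (k + 1)
  have hinj : Set.InjOn (fun t : ℕ => y (b + t)) (range (k + 1)) :=
    card_image_iff.1 (by rwa [card_range])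
  obtain ⟨v, hv⟩ : ∃ v, Y \ X = {v} := by
    refine card_eq_one.1 ?_
    have := card_sdiff_add_card_inter Y X
    rw [inter_comm] at this
    omega
  have hvYX : v ∈ Y \ X := hv ▸ mem_singleton_self v
  obtain ⟨t₀, ht₀, rfl⟩ := mem_cyclicWindow.1 (mem_sdiff.1 hvYX).1
  have hnot : y (b + t₀) ∉ X := (mem_sdiff.1 hvYX).2
  have hmem : ∀ t ≤ k, t ≠ t₀ → y (b + t) ∈ X := by
    intro t ht hne
    by_contra h
    have : y (b + t) ∈ Y \ X := mem_sdiff.2 ⟨apply_add_mem_cyclicWindow (by omega), h⟩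
    rw [hv, mem_singleton] at this
    exact hne (hinj (by simp; omega) (by simp; omega) this)
  rcases t₀ with _ | s
  · have h₁ := hmem 1 hk one_ne_zero
    simp only [Nat.cast_zero, add_zero, Nat.cast_one] at hnot h₁
    exact Or.inr (Or.inl (add_one_eq_of_notMem_cyclicWindow_of_add_one_mem hy hnot h₁).symm)
  have hnot' : y (b + s + 1) ∉ X := by simpa [add_assoc] using hnot
  have hexit : b + s = a + k :=
    eq_add_of_mem_cyclicWindow_of_add_one_notMem hy (hmem s (by omega) (by omega)) hnot'
  obtain rfl | hsk : s + 1 = k ∨ s + 1 < k := by omega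
  · left
    push_cast at hexit
    linear_combination hexit
  · refine Or.inr (Or.inr ?_)
    have h₂ : y (b + s + 1 + 1) ∈ X := by
      simpa [add_assoc, one_add_one_eq_two] using hmem (s + 2) (by omega) (by omega)
    have hentry := add_one_eq_of_notMem_cyclicWindow_of_add_one_mem hy hnot' h₂
    rw [← ZMod.natCast_eq_zero_iff]
    push_cast
    linear_combination hentry - hexit

theorem cyclicWindow_union_subset (hy : Injective y) {a b : ZMod l} {k n : ℕ} (hk : 1 ≤ k)
    (hkn : k + 2 ≤ n) (hb : (cyclicWindow y b (k + 1)).card = k + 1)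
    (hab : (cyclicWindow y a (k + 1) ∩ cyclicWindow y b (k + 1)).card = k) :
    cyclicWindow y a (k + 1) ∪ cyclicWindow y b (k + 1) ⊆ cyclicWindow y a n ∨
      cyclicWindow y a (k + 1) ∪ cyclicWindow y b (k + 1) ⊆ cyclicWindow y b n := by
  rcases eq_add_one_or_eq_add_one_or_dvd_of_card_cyclicWindow_inter hy hk hb hab with h | h | h
  · exact Or.inl <| union_subset (cyclicWindow_mono (by omega))
      ((cyclicWindow_subset_add_one_of_eq_add_one h).trans (cyclicWindow_mono (by omega)))
  · exact Or.inr <| union_subset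
      ((cyclicWindow_subset_add_one_of_eq_add_one h).trans (cyclicWindow_mono (by omega)))
      (cyclicWindow_mono (by omega))
  · have hl : l ≤ n := (Nat.le_of_dvd (by omega) h).trans hkn
    have : NeZero l := ⟨by rintro rfl; simp at h⟩
    exact Or.inl <|
      union_subset (cyclicWindow_subset_of_le a a hl) (cyclicWindow_subset_of_le a b hl)

end CyclicWindow

theorem Function.Periodic.exists_injective_zmod {α : Type*} {x : ℕ → α} {l : ℕ}
    (hx : Periodic x l) (hl : 0 < l) (hinj : Set.InjOn x (Set.Iio l)) :
    ∃ y : ZMod l → α, Injective y ∧ ∀ c : ℕ, x c = y c := by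
  have : NeZero l := ⟨hl.ne'⟩
  refine ⟨fun a => x a.val, fun a b h => ZMod.val_injective l ?_, fun c => ?_⟩
  · exact hinj (ZMod.val_lt a) (ZMod.val_lt b) h
  · simp only [ZMod.val_natCast, hx.map_mod_nat]

theorem exists_vertexSeq_of_forall_tStep {n : ℕ} {faces : Finset V → Prop} {F : ℕ → List V}
    (hn : 0 < n) (hF : ∀ i, TStep n faces (F i) (F (i + 1))) :
    ∃ x : ℕ → V, ∀ m, F m = (List.range n).map fun t => x (m + t) := by
  have hlen : ∀ m, (F m).length = n := fun m => (hF m).1.1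
  choose x hx using fun m =>
    (⟨_, List.getElem?_eq_getElem (hlen m ▸ hn)⟩ : ∃ v, (F m)[0]? = some v)
  have hget : ∀ t < n, ∀ m, (F m)[t]? = some (x (m + t)) := by
    intro t
    induction t with
    | zero => exact fun _ => hx
    | succ t ih =>
      intro ht m
      obtain ⟨-, -, v, hG, -⟩ := hF m
      have := ih (by omega) (m + 1)
      rw [hG, List.getElem?_append_left (by simp [hlen]; omega), List.getElem?_tail] at this
      rw [this, add_right_comm, add_assoc]
  refine ⟨x, fun m => List.ext_getElem? fun t => ?_⟩
  by_cases ht : t < n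
  · simp [hget t ht m, ht]
  · rw [List.getElem?_eq_none (by rw [hlen]; omega),
      List.getElem?_eq_none (by simp; omega)]

theorem toFinset_take_map_range_eq_cyclicWindow {l : ℕ} {x : ℕ → V} {y : ZMod l → V}
    (hxy : ∀ c : ℕ, x c = y c) (m : ℕ) {p n : ℕ} (hp : p ≤ n) :
    (((List.range n).map fun t => x (m + t)).take p).toFinset = cyclicWindow y m p := by
  rw [← List.map_take, List.take_range, min_eq_left hp]
  ext v
  simp [cyclicWindow, hxy]

theorem stmt18_general (n : ℕ) (faces : Finset V → Prop) (k : ℕ) (hk1 : 1 ≤ k) (hk2 : k ≤ n - 2)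
    (X Y : Finset V) (hYc : Y.card = k + 1)
    (hint : (X ∩ Y).card = k) (hnoface : ¬ ∃ Z : Finset V, faces Z ∧ X ⊆ Z ∧ Y ⊆ Z) :
    ¬ ∃ (l : ℕ) (F : ℕ → List V), IsZigzag n faces l F ∧
      (∀ i : ℕ, i < l → ∀ j : ℕ, j < l → (F i).head? = (F j).head? → i = j) ∧
      (∃ i : ℕ, ((F i).take (k + 1)).toFinset = X) ∧
      (∃ j : ℕ, ((F j).take (k + 1)).toFinset = Y) := by
  rintro ⟨l, F, ⟨hl, hstep, hper, -⟩, hsimple, ⟨i, rfl⟩, ⟨j, rfl⟩⟩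
  obtain ⟨x, hF⟩ := exists_vertexSeq_of_forall_tStep (by omega) hstep
  have hhead : ∀ m, (F m).head? = some (x m) := fun m => by
    rw [hF, List.head?_map, List.head?_range, if_neg (by omega)]
    rfl
  have hxper : Periodic x l := fun m => by
    simpa [hhead] using congrArg List.head? (hper m)
  obtain ⟨y, hy, hxy⟩ := hxper.exists_injective_zmod hl
    fun a ha b hb hab => hsimple a ha b hb (by rw [hhead, hhead, hab])
  have hface : ∀ m p, p ≤ n → ((F m).take p).toFinset = cyclicWindow y m p := fun m p hp => by
    rw [hF]
    exact toFinset_take_map_range_eq_cyclicWindow hxy m hp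
  have hfacet : ∀ m : ℕ, faces (cyclicWindow y m n) := fun m => by
    rw [← hface m n le_rfl, List.take_of_length_le (hstep m).1.1.le]
    exact (hstep m).1.2.2
  rw [hface i _ (by omega), hface j _ (by omega)] at hint hnoface
  rw [hface j _ (by omega)] at hYc
  rcases cyclicWindow_union_subset (n := n) hy hk1 (by omega) hYc hint with h | h
  · exact hnoface ⟨_, hfacet i, union_subset_iff.1 h⟩
  · exact hnoface ⟨_, hfacet j, union_subset_iff.1 h⟩

/-- Weakly adjacent `k`-faces (`1 ≤ k ≤ n - 2`; intersection a `(k-1)`-face, no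
face containing both) of a thin chamber complex cannot be connected by a simple zigzag. -/
theorem stmt18 [Fintype V] (n : ℕ) (faces : Finset V → Prop) (hΔ : IsThinComplex n faces)
    (hconn : ChamberConnected n faces) (k : ℕ) (hk1 : 1 ≤ k) (hk2 : k ≤ n - 2)
    (X Y : Finset V) (hXf : faces X) (hYf : faces Y)
    (hXc : X.card = k + 1) (hYc : Y.card = k + 1)
    (hint : (X ∩ Y).card = k) (hnoface : ¬ ∃ Z : Finset V, faces Z ∧ X ⊆ Z ∧ Y ⊆ Z) :
    ¬ ∃ (l : ℕ) (F : ℕ → List V), IsZigzag n faces l F ∧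
      (∀ i : ℕ, i < l → ∀ j : ℕ, j < l → (F i).head? = (F j).head? → i = j) ∧
      (∃ i : ℕ, ((F i).take (k + 1)).toFinset = X) ∧
      (∃ j : ℕ, ((F j).take (k + 1)).toFinset = Y) :=
  stmt18_general n faces k hk1 hk2 X Y hYc hint hnoface
end

section
/- Let Δ be a z-simple thin chamber complex of rank n ≥ 3 such that any two edges of Δ are z-connected (some zigzag contains both as 1-faces of its flags). Then Δ is 3-neighborly: every 3-element subset of the vertex set is a face. More generally, if there is 1 ≤ k < n-1 such that any two faces of the same rank r are z-connected for every 1 ≤ r ≤ k, then Δ is (k+2)-neighborly. -/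
/-!
Along a zigzag `F, T F, T² F, …` every flag is a window of `n` consecutive terms of one vertex
sequence `x₀, x₁, …`; this sequence is periodic with the length `l` of the zigzag, and
`z`-simplicity says exactly that `x` is injective on one period. The faces of the flags are
therefore arcs of the cycle `x₀, …, x_{l-1}`, and two arcs of `r + 1` vertices sharing `r` of them
lie together in an arc of `r + 2` vertices (they are neighbouring arcs, or the cycle has only
`r + 2` vertices), which is a face of a flag of the zigzag because `r + 2 ≤ n ≤ l`. Hence
`z`-connected `r`-faces meeting in an `(r-1)`-face span an `(r+1)`-face. For `r = 1` this makes
"lying in a common edge" transitive, so connectivity of the chamber graph makes every pair of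
vertices an edge; induction on `r ≤ k` then gives every `(r + 2)`-subset.
-/

open scoped Classical

variable {V : Type*}

/-- The complex is `z`-simple: in every zigzag, the vertices in one period of the 0-shadow are
pairwise distinct. -/
def ZSimple (n : ℕ) (faces : Finset V → Prop) : Prop :=
  ∀ (l : ℕ) (F : ℕ → List V), IsZigzag n faces l F →
    ∀ i : ℕ, i < l → ∀ j : ℕ, j < l → (F i).head? = (F j).head? → i = j

/-- Faces `X` and `Y` are `z`-connected: some zigzag contains both among the faces of its
flags. -/
def ZConnected (n : ℕ) (faces : Finset V → Prop) (X Y : Finset V) : Prop :=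
  ∃ (l : ℕ) (F : ℕ → List V), IsZigzag n faces l F ∧
    (∃ (i r : ℕ), ((F i).take r).toFinset = X) ∧
    (∃ (j r : ℕ), ((F j).take r).toFinset = Y)

open Finset

noncomputable def arc (x : ℕ → V) (i m : ℕ) : Finset V :=
  (range m).image fun s => x (i + s)

lemma Nat.eq_or_eq_add_of_modEq {a b l : ℕ} (h : a ≡ b [MOD l]) (ha : a < 2 * l)
    (hb : b < l) : a = b ∨ a = b + l := by
  have hq : a / l < 2 := Nat.div_lt_of_lt_mul (by rwa [mul_comm])
  have hdiv := Nat.div_add_mod a l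
  have hmod : a % l = b := by rw [← Nat.mod_eq_of_lt hb]; exact h
  rw [hmod] at hdiv
  interval_cases hq' : a / l <;> omega

section Arc

variable {x : ℕ → V} {l : ℕ}

lemma arc_mono {i m m' : ℕ} (h : m ≤ m') : arc x i m ⊆ arc x i m' :=
  image_subset_image (range_subset_range.2 h)

lemma arc_succ_subset (i m : ℕ) : arc x (i + 1) m ⊆ arc x i (m + 1) := by
  intro w hw
  obtain ⟨s, hs, rfl⟩ := mem_image.1 hw
  exact mem_image.2 ⟨s + 1, by simpa using hs, by rw [add_assoc, add_comm 1 s]⟩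

variable (hx : ∀ s t, x s = x t ↔ s ≡ t [MOD l])
include hx

lemma arc_mod (i m : ℕ) : arc x (i % l) m = arc x i m := by
  simp only [arc, (hx _ _).2 (Nat.mod_add_mod i l _)]

lemma arc_add_period (i m : ℕ) : arc x (i + l) m = arc x i m := by
  rw [← arc_mod hx, Nat.add_mod_right, arc_mod hx]

lemma mem_arc_zero_period (hl : 0 < l) (s : ℕ) : x s ∈ arc x 0 l :=
  mem_image.2 ⟨s % l, mem_range.2 (Nat.mod_lt s hl), (hx _ _).2 (by simp [Nat.ModEq])⟩

lemma injOn_arc (i : ℕ) : Set.InjOn (fun s => x (i + s)) (Set.Iio l) :=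
  fun _ hs _ ht hst => ((hx _ _).1 hst).add_left_cancel' i |>.eq_of_lt_of_lt hs ht

lemma card_arc {i m : ℕ} (hm : m ≤ l) : #(arc x i m) = m := by
  rw [arc, card_image_of_injOn, card_range]
  exact (injOn_arc hx i).mono fun s hs => lt_of_lt_of_le (mem_range.1 hs) hm

/-- Position `m` survives when `i + m` or `i + m + l` lies in the arc at `i + d`. -/
lemma arc_inter_arc {i d r : ℕ} (hd : d < l) (hr : r < l) :
    arc x i (r + 1) ∩ arc x (i + d) (r + 1) =
      ((range (r + 1)).filter fun m => d ≤ m ∨ m + l ≤ d + r).image fun m => x (i + m) := by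
  ext w
  simp only [arc, mem_inter, mem_image, mem_filter, mem_range]
  constructor
  · rintro ⟨⟨m, hm, rfl⟩, s, hs, he⟩
    have hmod : d + s ≡ m [MOD l] :=
      Nat.ModEq.add_left_cancel' i (by rw [← add_assoc]; exact (hx _ _).1 he)
    refine ⟨m, ⟨hm, ?_⟩, rfl⟩
    rcases Nat.eq_or_eq_add_of_modEq hmod (by omega) (by omega) with h | h <;> omega
  · rintro ⟨m, ⟨hm, hcase | hcase⟩, rfl⟩
    · exact ⟨⟨m, hm, rfl⟩, m - d, by omega, by rw [add_assoc, Nat.add_sub_cancel' hcase]⟩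
    · refine ⟨⟨m, hm, rfl⟩, m + l - d, by omega, (hx _ _).2 ?_⟩
      rw [show i + d + (m + l - d) = i + m + l by omega]
      exact Nat.add_mod_right _ _

lemma card_arc_inter_arc {i d r : ℕ} (hd : d < l) (hr : r < l) :
    #(arc x i (r + 1) ∩ arc x (i + d) (r + 1)) = (r + 1 - d) + (d + r + 1 - l) := by
  have hsplit : ((range (r + 1)).filter fun m => d ≤ m ∨ m + l ≤ d + r) =
      Ico d (r + 1) ∪ range (d + r + 1 - l) := by
    ext m
    simp only [mem_filter, mem_range, mem_union, mem_Ico]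
    omega
  have hdisj : Disjoint (Ico d (r + 1)) (range (d + r + 1 - l)) := by
    rw [disjoint_left]
    intro m h1 h2
    simp only [mem_Ico, mem_range] at h1 h2
    omega
  rw [arc_inter_arc hx hd hr, card_image_of_injOn, hsplit, card_union_of_disjoint hdisj,
    Nat.card_Ico, card_range]
  exact (injOn_arc hx i).mono fun m hm => by
    simp only [coe_filter, mem_range, Set.mem_ofPred_eq] at hm
    exact Set.mem_Iio.2 (by omega)

/-- Such arcs are neighbours, or the cycle has only `r + 2` points. -/
lemma exists_union_subset_arc {i j r : ℕ} (hr : 1 ≤ r) (hrl : r + 2 ≤ l)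
    (h : #(arc x i (r + 1) ∩ arc x j (r + 1)) = r) :
    ∃ t, arc x i (r + 1) ∪ arc x j (r + 1) ⊆ arc x t (r + 2) := by
  rw [← arc_mod hx i, ← arc_mod hx j] at h ⊢
  wlog hij : i % l ≤ j % l generalizing i j
  · rw [union_comm]
    exact this (by rwa [inter_comm]) (by omega)
  obtain ⟨d, hd⟩ := Nat.exists_eq_add_of_le hij
  have hdl : d < l := by have := Nat.mod_lt j (show 0 < l by omega); omega
  rw [hd, card_arc_inter_arc hx hdl (by omega)] at h
  rw [hd]
  obtain hd1 | hld | hlr : d = 1 ∨ l = d + 1 ∨ l = r + 2 := by omega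
  · rw [hd1]
    exact ⟨i % l, union_subset (arc_mono (by omega)) (arc_succ_subset _ _)⟩
  · refine ⟨i % l + d, union_subset ?_ (arc_mono (by omega))⟩
    calc arc x (i % l) (r + 1) = arc x (i % l + d + 1) (r + 1) := by
          rw [add_assoc, ← hld, arc_add_period hx]
      _ ⊆ arc x (i % l + d) (r + 2) := arc_succ_subset _ _
  · refine ⟨0, fun w hw => ?_⟩
    obtain ⟨s, rfl⟩ : ∃ s, x s = w := by
      simp only [arc, mem_union, mem_image] at hw
      obtain ⟨s, -, rfl⟩ | ⟨s, -, rfl⟩ := hw <;> exact ⟨_, rfl⟩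
    rw [← hlr]
    exact mem_arc_zero_period hx (by omega) s

end Arc

section Zigzag

variable {n l : ℕ} {faces : Finset V → Prop}

lemma TStep.getElem?_succ {F G : List V} (h : TStep n faces F G) {m : ℕ} (hm : m + 1 < n) :
    F[m + 1]? = G[m]? := by
  obtain ⟨⟨hlen, -⟩, -, y, rfl, -⟩ := h
  rw [List.getElem?_append_left (by simp [hlen]; omega), List.getElem?_tail]

variable {F : ℕ → List V}

lemma IsZigzag.exists_vertexSeq (hF : IsZigzag n faces l F) (hn : 0 < n) :
    ∃ x : ℕ → V, ∀ t, F t = (List.range n).map fun s => x (t + s) := by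
  have hlen t : (F t).length = n := (hF.2.1 t).1.1
  have v : V := (F 0)[0]'(by rw [hlen]; exact hn)
  have hget : ∀ m < n, ∀ t, (F t)[m]? = some ((F (t + m)).headD v) := by
    intro m
    induction m with
    | zero =>
      intro _ t
      rcases hFt : F t with _ | ⟨a, tl⟩
      · have := hlen t
        simp only [hFt, List.length_nil] at this
        omega
      · simp
    | succ m ih =>
      intro hm t
      rw [(hF.2.1 t).getElem?_succ hm, ih (by omega), add_right_comm, add_assoc]
  refine ⟨fun t => (F t).headD v, fun t => List.ext_getElem? fun m => ?_⟩
  by_cases hm : m < n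
  · simp [hget m hm, List.getElem?_range hm]
  · rw [List.getElem?_eq_none (by rw [hlen]; omega), List.getElem?_eq_none (by simp; omega)]

lemma toFinset_map_range (x : ℕ → V) (t n : ℕ) :
    ((List.range n).map fun s => x (t + s)).toFinset = arc x t n := by
  ext w
  simp [arc]

lemma toFinset_take_map_range (x : ℕ → V) (t n a : ℕ) :
    (((List.range n).map fun s => x (t + s)).take a).toFinset = arc x t (min a n) := by
  rw [← List.map_take, List.take_range, toFinset_map_range]

variable (hF : IsZigzag n faces l F) {x : ℕ → V}
  (hrep : ∀ t, F t = (List.range n).map fun s => x (t + s))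
include hF hrep

lemma IsZigzag.vertexSeq_eq_iff (hsimple : ZSimple n faces) (hn : 0 < n) (s t : ℕ) :
    x s = x t ↔ s ≡ t [MOD l] := by
  have hhead t : (F t).head? = some (x t) := by
    simp [hrep t, List.head?_range, Nat.pos_iff_ne_zero.1 hn]
  have hper : Function.Periodic x l := fun t => by
    simpa [hhead] using congrArg List.head? (hF.2.2.1 t)
  rw [← hper.map_mod_nat s, ← hper.map_mod_nat t]
  refine ⟨fun h => hsimple l F hF _ (Nat.mod_lt s hF.1) _ (Nat.mod_lt t hF.1) ?_,
    fun h => congrArg x h⟩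
  rw [hhead, hhead, h]

lemma IsZigzag.le_length (hsimple : ZSimple n faces) : n ≤ l := by
  by_contra! hln
  have hnd : ((List.range n).map fun s => x (0 + s)).Nodup := hrep 0 ▸ (hF.2.1 0).1.2.1
  have hx0l : x 0 = x l :=
    (hF.vertexSeq_eq_iff hrep hsimple (by omega) 0 l).2 (by simp [Nat.ModEq])
  exact hF.1.ne (List.inj_on_of_nodup_map hnd (List.mem_range.2 (by omega))
    (List.mem_range.2 hln) (by simpa using hx0l))

end Zigzag

section Neighborly

variable {n : ℕ} {faces : Finset V → Prop}

/-- The paper's key lemma: `z`-connected `r`-faces with `r < n - 1` are never weakly adjacent. -/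
theorem faces_union_of_zConnected (hΔ : IsThinComplex n faces) (hsimple : ZSimple n faces)
    {r : ℕ} (hr : 1 ≤ r) (hrn : r + 2 ≤ n) {X Y : Finset V} (hX : #X = r + 1)
    (hY : #Y = r + 1) (hXY : #(X ∩ Y) = r) (h : ZConnected n faces X Y) : faces (X ∪ Y) := by
  obtain ⟨l, F, hF, ⟨i, a, rfl⟩, ⟨j, b, rfl⟩⟩ := h
  obtain ⟨x, hrep⟩ := hF.exists_vertexSeq (by omega)
  have hx := hF.vertexSeq_eq_iff hrep hsimple (by omega)
  have hnl := hF.le_length hrep hsimple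
  simp only [hrep, toFinset_take_map_range] at hX hY hXY ⊢
  rw [card_arc hx (by omega)] at hX hY
  rw [hX, hY] at hXY ⊢
  obtain ⟨t, ht⟩ := exists_union_subset_arc hx hr (hrn.trans hnl) hXY
  refine hΔ.2.1 (hF.2.1 t).1.2.2 (ht.trans ?_)
  rw [hrep, toFinset_map_range]
  exact arc_mono hrn

theorem faces_pair_trans (hΔ : IsThinComplex n faces) (hsimple : ZSimple n faces)
    (hn : 3 ≤ n) (hzc : ∀ X Y : Finset V, faces X → faces Y → #X = 2 → #Y = 2 →
      ZConnected n faces X Y) {a b c : V} (hab : faces {a, b}) (hbc : faces {b, c}) :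
    faces {a, c} := by
  by_cases hab' : a = b
  · rwa [hab']
  by_cases hbc' : b = c
  · rwa [← hbc']
  by_cases hac : a = c
  · rw [hac, pair_eq_singleton]
    exact hΔ.1 c
  have hinter : ({a, b} : Finset V) ∩ {b, c} = {b} := by
    ext w
    simp only [mem_inter, mem_insert, mem_singleton]
    constructor
    · rintro ⟨h1 | h1, h2 | h2⟩ <;> simp_all
    · rintro rfl
      simp
  have hunion := faces_union_of_zConnected hΔ hsimple le_rfl hn (card_pair hab')
    (card_pair hbc') (by rw [hinter, card_singleton]) (hzc _ _ hab hbc (card_pair hab')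
    (card_pair hbc'))
  exact hΔ.2.1 hunion (by intro w; simp only [mem_insert, mem_singleton, mem_union]; tauto)

theorem faces_pair (hΔ : IsThinComplex n faces) (hconn : ChamberConnected n faces)
    (hsimple : ZSimple n faces) (hn : 3 ≤ n) (hzc : ∀ X Y : Finset V, faces X → faces Y →
      #X = 2 → #Y = 2 → ZConnected n faces X Y) (u v : V) : faces {u, v} := by
  have hsub {C : Finset V} (hC : faces C) {a b : V} (ha : a ∈ C) (hb : b ∈ C) : faces {a, b} :=
    hΔ.2.1 hC (insert_subset ha (singleton_subset_iff.2 hb))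
  obtain ⟨Cu, hCu, hu⟩ := hΔ.2.2.2.1 (hΔ.1 u)
  obtain ⟨Cv, hCv, hv⟩ := hΔ.2.2.2.1 (hΔ.1 v)
  obtain ⟨m, p, rfl, rfl, hpath⟩ := hconn Cu Cv hCu hCv
  suffices ∀ t ≤ m, ∀ w ∈ p t, faces {u, w} from this m le_rfl v (hv (mem_singleton_self v))
  intro t
  induction t with
  | zero => exact fun _ w hw => hsub hCu.1 (hu (mem_singleton_self u)) hw
  | succ t ih =>
    intro ht w hw
    obtain ⟨-, hCt, -, hcard⟩ := hpath t (by omega)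
    obtain ⟨z, hz⟩ : (p t ∩ p (t + 1)).Nonempty := card_pos.1 (by omega)
    exact faces_pair_trans hΔ hsimple hn hzc (ih (by omega) z (mem_inter.1 hz).1)
      (hsub hCt.1 (mem_inter.1 hz).2 hw)

theorem faces_of_card_eq_succ_succ (hΔ : IsThinComplex n faces) (hsimple : ZSimple n faces)
    {r : ℕ} (hr : 1 ≤ r) (hrn : r + 2 ≤ n) (hzc : ∀ X Y : Finset V, faces X → faces Y →
      #X = r + 1 → #Y = r + 1 → ZConnected n faces X Y)
    (hfaces : ∀ S : Finset V, #S = r + 1 → faces S) (S : Finset V) (hS : #S = r + 2) :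
    faces S := by
  obtain ⟨u, hu⟩ : S.Nonempty := card_pos.1 (by omega)
  obtain ⟨v, hv⟩ : (S.erase u).Nonempty := card_pos.1 (by rw [card_erase_of_mem hu]; omega)
  have hvS := mem_of_mem_erase hv
  have hvu := ne_of_mem_erase hv
  have hX : #(S.erase v) = r + 1 := by rw [card_erase_of_mem hvS]; omega
  have hY : #(S.erase u) = r + 1 := by rw [card_erase_of_mem hu]; omega
  have hinter : S.erase v ∩ S.erase u = (S.erase u).erase v := by
    ext w
    simp only [mem_inter, mem_erase]
    tauto
  have hunion : S.erase v ∪ S.erase u = S := by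
    ext w
    simp only [mem_union, mem_erase]
    by_cases hw : w = v <;> simp_all
  rw [← hunion]
  refine faces_union_of_zConnected hΔ hsimple hr hrn hX hY ?_
    (hzc _ _ (hfaces _ hX) (hfaces _ hY) hX hY)
  rw [hinter, card_erase_of_mem hv, hY]
  rfl

end Neighborly

theorem stmt19_general (n : ℕ) (faces : Finset V → Prop) (hΔ : IsThinComplex n faces)
    (hconn : ChamberConnected n faces) (hsimple : ZSimple n faces)
    (k : ℕ) (hk1 : 1 ≤ k) (hk2 : k < n - 1)
    (hzc : ∀ r : ℕ, 1 ≤ r → r ≤ k → ∀ X Y : Finset V, faces X → faces Y →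
      X.card = r + 1 → Y.card = r + 1 → ZConnected n faces X Y) :
    ∀ S : Finset V, S.card = k + 2 → faces S := by
  suffices ∀ m ≤ k, ∀ S : Finset V, #S = m + 2 → faces S from this k le_rfl
  intro m
  induction m with
  | zero =>
    intro _ S hS
    obtain ⟨u, v, -, rfl⟩ := card_eq_two.1 hS
    exact faces_pair hΔ hconn hsimple (by omega) (hzc 1 le_rfl hk1) u v
  | succ m ih =>
    intro hm
    exact faces_of_card_eq_succ_succ hΔ hsimple (by omega) (by omega)
      (hzc (m + 1) (by omega) hm) (ih (by omega))

/-- If a `z`-simple thin chamber complex of rank `n ≥ 3` has `1 ≤ k < n - 1` such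
that any two faces of the same rank `r` with `1 ≤ r ≤ k` are `z`-connected, then it is
`(k+2)`-neighborly: every `(k+2)`-element subset of the vertex set is a face. (The case `k = 1`
is: if any two edges are `z`-connected, the complex is `3`-neighborly.) -/
theorem stmt19 [Fintype V] (n : ℕ) (faces : Finset V → Prop) (hΔ : IsThinComplex n faces)
    (hconn : ChamberConnected n faces) (hn : 3 ≤ n) (hsimple : ZSimple n faces)
    (k : ℕ) (hk1 : 1 ≤ k) (hk2 : k < n - 1)
    (hzc : ∀ r : ℕ, 1 ≤ r → r ≤ k → ∀ X Y : Finset V, faces X → faces Y →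
      X.card = r + 1 → Y.card = r + 1 → ZConnected n faces X Y) :
    ∀ S : Finset V, S.card = k + 2 → faces S :=
  stmt19_general n faces hΔ hconn hsimple k hk1 hk2 hzc
end
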